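/- arXiv:2107.04572 — 3 statements merged into one kernel-verified Lean document; each statement's English description precedes it below -/
import Mathlib

section
/- Let 𝒯 be a 4-uniform hypergraph with vertex set V of cardinality n and hyperedge index set E of cardinality n − 3, and let v₁,v₂,v₃ ∈ V be three distinct vertices such that E_v is nonempty for every v ∈ V∖{v₁,v₂,v₃}. In the polynomial ring ℤ[H_x : x ∈ E], consider the product Q = (∏_{i=1}^{3} ∏_{x ∈ E_{v_i}} H_x) · ∏_{v ∈ V∖{v₁,v₂,v₃}} 𝐞_{|E_v|−1}({H_x : x ∈ E_v}), where 𝐞_{k}({H_x : x ∈ S}) denotes the elementary symmetric polynomial of degree k in the variables indexed by S. Then the coefficient of the monomial ∏_{x ∈ E} H_x³ in Q equals P(G_𝒯 − {v₁,v₂,v₃}), the number of perfect matchings of G_𝒯 − {v₁,v₂,v₃}. -/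
open MvPolynomial

lemma prodX_aux {E : Type} [DecidableEq E] (s : Finset E) :
    ∏ x ∈ s, (X x : MvPolynomial E ℤ) = monomial (∑ x ∈ s, Finsupp.single x 1) 1 := by
  induction s using Finset.induction with
  | empty => simp
  | insert _ _ h ih =>
    rw [Finset.prod_insert h, ih, Finset.sum_insert h,
      show (X _ : MvPolynomial E ℤ) = monomial (Finsupp.single _ 1) 1 from rfl,
      monomial_mul, one_mul]

lemma prodMono_aux {ι E : Type} (s : Finset ι) (m : ι → (E →₀ ℕ)) :
    ∏ i ∈ s, (monomial (m i) (1:ℤ)) = monomial (∑ i ∈ s, m i) 1 := by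
  classical
  induction s using Finset.induction with
  | empty => simp
  | insert _ _ h ih => rw [Finset.prod_insert h, ih, Finset.sum_insert h, monomial_mul, one_mul]

lemma sumSingle_aux {E : Type} [DecidableEq E] (s : Finset E) (x : E) :
    (∑ y ∈ s, Finsupp.single y (1:ℕ)) x = if x ∈ s then 1 else 0 := by
  rw [Finset.sum_apply']
  simp [Finsupp.single_apply]

lemma pcard_aux {E : Type} [DecidableEq E] (s : Finset E) (hs : s.Nonempty) :
    s.powersetCard (s.card - 1) = s.image (fun y => s.erase y) := by
  ext T
  simp only [Finset.mem_powersetCard, Finset.mem_image]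
  constructor
  · rintro ⟨hT, hc⟩
    have h1 : (s \ T).card = 1 := by
      rw [Finset.card_sdiff_of_subset hT, hc]
      have := hs.card_pos
      omega
    obtain ⟨y, hy⟩ := Finset.card_eq_one.mp h1
    have hys : y ∈ s := by
      have : y ∈ s \ T := hy ▸ Finset.mem_singleton_self y
      exact (Finset.mem_sdiff.mp this).1
    refine ⟨y, hys, ?_⟩
    rw [Finset.erase_eq, ← hy, Finset.sdiff_sdiff_eq_self hT]
  · rintro ⟨y, hy, rfl⟩
    exact ⟨Finset.erase_subset _ _, Finset.card_erase_of_mem hy⟩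

lemma erase_injOn_aux {E : Type} [DecidableEq E] (s : Finset E) (a : E) (ha : a ∈ s)
    (b : E) (hb : b ∈ s) (h : s.erase a = s.erase b) : a = b := by
  by_contra hne
  have : a ∈ s.erase b := Finset.mem_erase.mpr ⟨hne, ha⟩
  rw [show s.erase b = s.erase a from h.symm] at this
  exact (Finset.mem_erase.mp this).1 rfl

lemma card1_iff_aux {ι E : Type} [Fintype ι] [DecidableEq E] (p : ι → E) (x : E) :
    ((Finset.univ.filter fun w => p w = x).card = 1 ↔ ∃! w, p w = x) := by
  rw [Finset.card_eq_one]
  constructor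
  · rintro ⟨a, ha⟩
    have haf : a ∈ Finset.univ.filter (fun w => p w = x) := ha ▸ Finset.mem_singleton_self a
    refine ⟨a, (Finset.mem_filter.mp haf).2, fun b hb => ?_⟩
    have : b ∈ ({a} : Finset _) := ha ▸ Finset.mem_filter.mpr ⟨Finset.mem_univ b, hb⟩
    exact Finset.mem_singleton.mp this
  · rintro ⟨a, ha, hu⟩
    refine ⟨a, ?_⟩
    ext b
    simp only [Finset.mem_filter, Finset.mem_univ, true_and, Finset.mem_singleton]
    exact ⟨fun hb => hu b hb, fun hb => hb ▸ ha⟩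

/-- Let `𝒯` be a 4-uniform hypergraph with vertex set `V` of cardinality `n`
and hyperedge index set `E` of cardinality `n - 3`, and let `v₁, v₂, v₃ ∈ V` be distinct
vertices with `E_v ≠ ∅` for every `v ∈ V ∖ {v₁,v₂,v₃}` (where `E_v = {x ∈ E : v ∈ e(x)}`).
In `ℤ[H_x : x ∈ E]`, consider
`Q = (∏_{i=1}^{3} ∏_{x ∈ E_{vᵢ}} H_x) · ∏_{v ∈ V∖{v₁,v₂,v₃}} 𝐞_{|E_v|−1}({H_x : x ∈ E_v})`,
where `𝐞_k({H_x : x ∈ S}) = ∑_{T ⊆ S, |T| = k} ∏_{x ∈ T} H_x`.  Then the coefficient of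
`∏_{x ∈ E} H_x³` in `Q` equals `P(G_𝒯 − {v₁,v₂,v₃})`, the number of perfect matchings of
`G_𝒯 − {v₁,v₂,v₃}`. -/
theorem stmt_4 {V E : Type} [Fintype V] [Fintype E] [DecidableEq V] [DecidableEq E]
    (n : ℕ) (hV : Fintype.card V = n) (hE : Fintype.card E = n - 3)
    (e : E → Finset V) (he : ∀ x : E, (e x).card = 4)
    (v₁ v₂ v₃ : V) (h12 : v₁ ≠ v₂) (h13 : v₁ ≠ v₃) (h23 : v₂ ≠ v₃)
    (Ev : V → Finset E) (hEv : ∀ v : V, Ev v = Finset.univ.filter fun x : E => v ∈ e x)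
    (hne : ∀ v : V, v ∉ ({v₁, v₂, v₃} : Finset V) → (Ev v).Nonempty) :
    MvPolynomial.coeff (Finsupp.equivFunOnFinite.symm fun _ : E => (3 : ℕ))
      ((∏ x ∈ Ev v₁, (X x : MvPolynomial E ℤ)) *
        (∏ x ∈ Ev v₂, (X x : MvPolynomial E ℤ)) *
        (∏ x ∈ Ev v₃, (X x : MvPolynomial E ℤ)) *
        ∏ v ∈ Finset.univ.filter (fun v : V => v ∉ ({v₁, v₂, v₃} : Finset V)),
          ∑ T ∈ (Ev v).powersetCard ((Ev v).card - 1),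
            ∏ x ∈ T, (X x : MvPolynomial E ℤ)) =
      (Nat.card {f : E ≃ {v : V // v ∉ ({v₁, v₂, v₃} : Finset V)} //
        ∀ x : E, (f x : V) ∈ e x} : ℤ) := by
  classical
  have hmemEv : ∀ (v : V) (x : E), x ∈ Ev v ↔ v ∈ e x := by
    intro v x; rw [hEv]; simp
  -- Step 1: rewrite the elementary symmetric polynomial sums
  have hstep1 : ∀ v ∈ Finset.univ.filter (fun v : V => v ∉ ({v₁, v₂, v₃} : Finset V)),
      (∑ T ∈ (Ev v).powersetCard ((Ev v).card - 1), ∏ x ∈ T, (X x : MvPolynomial E ℤ))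
      = ∑ y ∈ Ev v, monomial (∑ x ∈ (Ev v).erase y, Finsupp.single x 1) (1:ℤ) := by
    intro v hv
    have hv' : v ∉ ({v₁, v₂, v₃} : Finset V) := (Finset.mem_filter.mp hv).2
    rw [pcard_aux _ (hne v hv'), Finset.sum_image (fun a ha b hb h => erase_injOn_aux _ a ha b hb h)]
    exact Finset.sum_congr rfl fun y _ => prodX_aux _
  have hQ : ((∏ x ∈ Ev v₁, (X x : MvPolynomial E ℤ)) *
        (∏ x ∈ Ev v₂, (X x : MvPolynomial E ℤ)) *
        (∏ x ∈ Ev v₃, (X x : MvPolynomial E ℤ)) *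
        ∏ v ∈ Finset.univ.filter (fun v : V => v ∉ ({v₁, v₂, v₃} : Finset V)),
          ∑ T ∈ (Ev v).powersetCard ((Ev v).card - 1),
            ∏ x ∈ T, (X x : MvPolynomial E ℤ))
      = ∑ p ∈ Fintype.piFinset (fun w : {v : V // v ∉ ({v₁, v₂, v₃} : Finset V)} => Ev (w : V)),
          monomial ((∑ x ∈ Ev v₁, Finsupp.single x 1) + (∑ x ∈ Ev v₂, Finsupp.single x 1)
            + (∑ x ∈ Ev v₃, Finsupp.single x 1)
            + ∑ w : {v : V // v ∉ ({v₁, v₂, v₃} : Finset V)},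
                ∑ x ∈ (Ev (w : V)).erase (p w), Finsupp.single x 1) (1:ℤ) := by
    rw [Finset.prod_congr rfl hstep1,
      Finset.prod_subtype (p := fun v : V => v ∉ ({v₁, v₂, v₃} : Finset V))
        (Finset.univ.filter (fun v : V => v ∉ ({v₁, v₂, v₃} : Finset V)))
        (fun v => by simp)
        (fun v => ∑ y ∈ Ev v, monomial (∑ x ∈ (Ev v).erase y, Finsupp.single x 1) (1:ℤ)),
      Finset.prod_univ_sum, prodX_aux (Ev v₁), prodX_aux (Ev v₂), prodX_aux (Ev v₃),
      Finset.mul_sum]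
    refine Finset.sum_congr rfl fun p _ => ?_
    rw [prodMono_aux, monomial_mul, monomial_mul, monomial_mul, one_mul, one_mul, one_mul]
  rw [hQ, coeff_sum]
  simp only [coeff_monomial]
  -- Step 2: the key equivalence
  have key : ∀ p ∈ Fintype.piFinset (fun w : {v : V // v ∉ ({v₁, v₂, v₃} : Finset V)} => Ev (w : V)),
      (((∑ x ∈ Ev v₁, Finsupp.single x 1) + (∑ x ∈ Ev v₂, Finsupp.single x 1)
            + (∑ x ∈ Ev v₃, Finsupp.single x 1)
            + ∑ w : {v : V // v ∉ ({v₁, v₂, v₃} : Finset V)},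
                ∑ x ∈ (Ev (w : V)).erase (p w), Finsupp.single x 1)
          = Finsupp.equivFunOnFinite.symm fun _ : E => (3:ℕ)) ↔ Function.Bijective p := by
    intro p hp
    have hp' : ∀ w : {v : V // v ∉ ({v₁, v₂, v₃} : Finset V)}, p w ∈ Ev (w : V) := fun w => (Fintype.mem_piFinset.mp hp) w
    have h4 : ∀ x : E,
        ((if x ∈ Ev v₁ then (1:ℕ) else 0) + (if x ∈ Ev v₂ then 1 else 0)
          + (if x ∈ Ev v₃ then 1 else 0))
        + ∑ w : {v : V // v ∉ ({v₁, v₂, v₃} : Finset V)}, (if x ∈ Ev (w : V) then (1:ℕ) else 0)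
        = 4 := by
      intro x
      have hsplit := Finset.sum_filter_add_sum_filter_not Finset.univ
        (fun v : V => v ∈ ({v₁, v₂, v₃} : Finset V)) (fun v => if x ∈ Ev v then (1:ℕ) else 0)
      have h1 : Finset.univ.filter (fun v : V => v ∈ ({v₁, v₂, v₃} : Finset V))
          = ({v₁, v₂, v₃} : Finset V) := by ext v; simp
      have h2 : ∑ v ∈ ({v₁, v₂, v₃} : Finset V), (if x ∈ Ev v then (1:ℕ) else 0)
          = (if x ∈ Ev v₁ then (1:ℕ) else 0) + (if x ∈ Ev v₂ then 1 else 0)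
            + (if x ∈ Ev v₃ then 1 else 0) := by
        rw [Finset.sum_insert (by simp [h12, h13]), Finset.sum_insert (by simp [h23]),
          Finset.sum_singleton, add_assoc]
      have h3 : ∑ v ∈ Finset.univ.filter (fun v : V => ¬ v ∈ ({v₁, v₂, v₃} : Finset V)),
            (if x ∈ Ev v then (1:ℕ) else 0)
          = ∑ w : {v : V // v ∉ ({v₁, v₂, v₃} : Finset V)}, (if x ∈ Ev (w : V) then (1:ℕ) else 0) :=
        Finset.sum_subtype _ (fun v => by simp) _
      have h5 : ∑ v : V, (if x ∈ Ev v then (1:ℕ) else 0) = 4 := by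
        rw [← Finset.card_filter]
        have : Finset.univ.filter (fun v => x ∈ Ev v) = e x := by
          ext v; simp [hmemEv]
        rw [this, he]
      rw [h1, h2, h3] at hsplit
      omega
    have hsum : ∀ x : E,
        ∑ w : {v : V // v ∉ ({v₁, v₂, v₃} : Finset V)}, (if x ∈ Ev (w : V) then (1:ℕ) else 0)
        = (∑ w : {v : V // v ∉ ({v₁, v₂, v₃} : Finset V)},
            (if x ∈ (Ev (w : V)).erase (p w) then (1:ℕ) else 0))
          + ∑ w : {v : V // v ∉ ({v₁, v₂, v₃} : Finset V)}, (if p w = x then (1:ℕ) else 0) := by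
      intro x
      rw [← Finset.sum_add_distrib]
      refine Finset.sum_congr rfl fun w _ => ?_
      rcases eq_or_ne (p w) x with h | h
      · subst h
        simp [hp' w, Finset.mem_erase]
      · simp [Finset.mem_erase, Ne.symm h, h]
    have hL : ∀ x : E,
        ((∑ x ∈ Ev v₁, Finsupp.single x 1) + (∑ x ∈ Ev v₂, Finsupp.single x 1)
            + (∑ x ∈ Ev v₃, Finsupp.single x 1)
            + ∑ w : {v : V // v ∉ ({v₁, v₂, v₃} : Finset V)},
                ∑ x ∈ (Ev (w : V)).erase (p w), Finsupp.single x 1 : E →₀ ℕ) x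
        = (if x ∈ Ev v₁ then (1:ℕ) else 0) + (if x ∈ Ev v₂ then 1 else 0)
            + (if x ∈ Ev v₃ then 1 else 0)
            + ∑ w : {v : V // v ∉ ({v₁, v₂, v₃} : Finset V)},
                (if x ∈ (Ev (w : V)).erase (p w) then (1:ℕ) else 0) := by
      intro x
      rw [Finsupp.add_apply, Finsupp.add_apply, Finsupp.add_apply, sumSingle_aux,
        sumSingle_aux, sumSingle_aux, Finset.sum_apply']
      exact congrArg _ (Finset.sum_congr rfl fun w _ => sumSingle_aux _ _)
    rw [Function.bijective_iff_existsUnique, DFunLike.ext_iff]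
    refine forall_congr' fun x => ?_
    rw [← card1_iff_aux p x, Finset.card_filter, hL x,
      show (Finsupp.equivFunOnFinite.symm fun _ : E => (3:ℕ)) x = 3 from rfl]
    have e4 := h4 x
    have es := hsum x
    omega
  rw [Finset.sum_congr rfl (fun p hp => if_congr (key p hp) rfl rfl), Finset.sum_boole]
  norm_cast
  rw [Nat.card_eq_fintype_card]
  rw [show Fintype.card {f : E ≃ {v : V // v ∉ ({v₁, v₂, v₃} : Finset V)} //
      ∀ x : E, (f x : V) ∈ e x}
    = (Finset.univ : Finset {f : E ≃ {v : V // v ∉ ({v₁, v₂, v₃} : Finset V)} //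
      ∀ x : E, (f x : V) ∈ e x}).card from rfl]
  refine Finset.card_bij'
    (fun p hp => ⟨(Equiv.ofBijective p (Finset.mem_filter.mp hp).2).symm, ?_⟩)
    (fun f _ => fun w => f.1.symm w)
    ?_ ?_ ?_ ?_
  · intro x
    set q := Equiv.ofBijective p (Finset.mem_filter.mp hp).2 with hq
    have hpx : p (q.symm x) = x := Equiv.ofBijective_apply_symm_apply p _ x
    have := (Fintype.mem_piFinset.mp (Finset.mem_filter.mp hp).1) (q.symm x)
    rw [hpx, hmemEv] at this
    exact this
  · intro p hp
    exact Finset.mem_univ _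
  · intro f _
    refine Finset.mem_filter.mpr ⟨Fintype.mem_piFinset.mpr fun w => ?_,
      f.1.symm.bijective⟩
    rw [hmemEv]
    have := f.2 (f.1.symm w)
    rwa [Equiv.apply_symm_apply] at this
  · intro p hp
    funext w
    simp [Equiv.ofBijective_apply]
  · intro f _
    apply Subtype.ext
    apply Equiv.ext
    intro x
    rw [Equiv.symm_apply_eq]
    exact (f.1.symm_apply_apply x).symm
end

section
/- Let E be a finite set, let S ⊆ E be a nonempty subset with |S| = k, and let I ⊆ ℤ[H_x : x ∈ E] be the ideal generated by {H_x⁴ : x ∈ E}. Suppose p ∈ ℤ[H_x : x ∈ E] is homogeneous of degree k − 1 and satisfies, for every j ∈ S, H_j³·p − H_j³·∏_{i ∈ S∖{j}} H_i ∈ I. Then p − 𝐞_{k−1}({H_i : i ∈ S}) ∈ I, where 𝐞_{k−1}({H_i : i ∈ S}) is the elementary symmetric polynomial of degree k − 1 in the variables indexed by S. In other words, 𝐞_{k−1}({H_i : i ∈ S}) is the unique degree-(k−1) element α of the quotient ring ℤ[H_x : x ∈ E]/⟨H_x⁴ : x ∈ E⟩ satisfying H_j³·α = H_j³·∏_{i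 ∈ S∖{j}} H_i for all j ∈ S. -/
open MvPolynomial

lemma mem_span_X_pow_four_iff {E : Type} [Fintype E] [DecidableEq E]
    (q : MvPolynomial E ℤ) :
    q ∈ Ideal.span (Set.range fun x : E => (X x : MvPolynomial E ℤ) ^ 4) ↔
      ∀ m ∈ q.support, ∃ x : E, 4 ≤ m x := by
  have hset : (Set.range fun x : E => (X x : MvPolynomial E ℤ) ^ 4)
      = (fun s => monomial s (1 : ℤ)) '' (Set.range fun x : E => Finsupp.single x 4) := by
    rw [← Set.range_comp]
    refine congrArg Set.range (funext fun x => ?_)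
    simp [Function.comp, X_pow_eq_monomial]
  rw [hset, mem_ideal_span_monomial_image]
  constructor
  · intro hq m hm
    obtain ⟨si, ⟨x, hx⟩, hle⟩ := hq m hm
    exact ⟨x, by simpa [← hx, Finsupp.single_le_iff] using hle⟩
  · intro hq m hm
    obtain ⟨x, hx⟩ := hq m hm
    exact ⟨Finsupp.single x 4, ⟨x, rfl⟩, Finsupp.single_le_iff.mpr hx⟩

/-- Let `E` be a finite set, `S ⊆ E` a nonempty subset with `|S| = k`, and
`I ⊆ ℤ[H_x : x ∈ E]` the ideal generated by `{H_x⁴ : x ∈ E}`.  If `p` is homogeneous of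
degree `k − 1` and satisfies `H_j³·p − H_j³·∏_{i ∈ S∖{j}} H_i ∈ I` for every `j ∈ S`,
then `p − 𝐞_{k−1}({H_i : i ∈ S}) ∈ I`, where
`𝐞_{k−1}({H_i : i ∈ S}) = ∑_{T ⊆ S, |T| = k−1} ∏_{i ∈ T} H_i`. -/
theorem stmt_5 {E : Type} [Fintype E] [DecidableEq E]
    (S : Finset E) (hS : S.Nonempty) (k : ℕ) (hk : S.card = k)
    (I : Ideal (MvPolynomial E ℤ))
    (hI : I = Ideal.span (Set.range fun x : E => (X x : MvPolynomial E ℤ) ^ 4))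
    (p : MvPolynomial E ℤ) (hp : p.IsHomogeneous (k - 1))
    (h : ∀ j ∈ S,
      (X j : MvPolynomial E ℤ) ^ 3 * p - X j ^ 3 * ∏ i ∈ S.erase j, X i ∈ I) :
    p - ∑ T ∈ S.powersetCard (k - 1), ∏ i ∈ T, (X i : MvPolynomial E ℤ) ∈ I := by
  have hk1 : 1 ≤ k := hk ▸ Finset.card_pos.mpr hS
  set e : MvPolynomial E ℤ := ∑ T ∈ S.powersetCard (k - 1), ∏ i ∈ T, X i with he_def
  -- `e` is homogeneous of degree `k - 1`
  have he : e.IsHomogeneous (k - 1) := by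
    apply IsHomogeneous.sum
    intro T hT
    have hTcard : T.card = k - 1 := (Finset.mem_powersetCard.mp hT).2
    have := IsHomogeneous.prod T (fun i => (X i : MvPolynomial E ℤ)) (fun _ => 1)
      (fun i _ => isHomogeneous_X _ _)
    simpa [hTcard] using this
  have hq : (p - e).IsHomogeneous (k - 1) := hp.sub he
  -- X j^4 ∈ I
  have hX4 : ∀ j : E, (X j : MvPolynomial E ℤ) ^ 4 ∈ I := fun j =>
    hI ▸ Ideal.subset_span ⟨j, rfl⟩
  -- key: X j ^ 3 * (p - e) ∈ I for j ∈ S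
  have hXq : ∀ j ∈ S, (X j : MvPolynomial E ℤ) ^ 3 * (p - e) ∈ I := by
    intro j hj
    have hmem : S.erase j ∈ S.powersetCard (k - 1) := by
      rw [Finset.mem_powersetCard]
      exact ⟨Finset.erase_subset _ _, by rw [Finset.card_erase_of_mem hj, hk]⟩
    have h2 : (X j : MvPolynomial E ℤ) ^ 3 * e - X j ^ 3 * ∏ i ∈ S.erase j, X i ∈ I := by
      have hsplit : (X j : MvPolynomial E ℤ) ^ 3 * e - X j ^ 3 * ∏ i ∈ S.erase j, X i
          = ∑ T ∈ (S.powersetCard (k - 1)).erase (S.erase j), X j ^ 3 * ∏ i ∈ T, X i := by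
        rw [he_def, Finset.mul_sum, ← Finset.sum_erase_add _ _ hmem]
        ring
      rw [hsplit]
      apply Ideal.sum_mem
      intro T hT
      obtain ⟨hTne, hTmem⟩ := Finset.mem_erase.mp hT
      obtain ⟨hTsub, hTcard⟩ := Finset.mem_powersetCard.mp hTmem
      have hjT : j ∈ T := by
        by_contra hjT
        exact hTne (Finset.eq_of_subset_of_card_le
          (fun x hx => Finset.mem_erase.mpr ⟨fun hxj => hjT (hxj ▸ hx), hTsub hx⟩)
          (by rw [Finset.card_erase_of_mem hj, hk, hTcard]))
      have : (X j : MvPolynomial E ℤ) ^ 3 * ∏ i ∈ T, X i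
          = X j ^ 4 * ∏ i ∈ T.erase j, X i := by
        rw [← Finset.mul_prod_erase T _ hjT]; ring
      rw [this]
      exact Ideal.mul_mem_right _ _ (hX4 j)
    have hrw : (X j : MvPolynomial E ℤ) ^ 3 * (p - e)
        = (X j ^ 3 * p - X j ^ 3 * ∏ i ∈ S.erase j, X i)
          - (X j ^ 3 * e - X j ^ 3 * ∏ i ∈ S.erase j, X i) := by ring
    rw [hrw]
    exact I.sub_mem (h j hj) h2
  -- conclude via the monomial ideal criterion
  rw [hI, mem_span_X_pow_four_iff]
  intro m hm
  by_contra hc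
  push_neg at hc
  have hm' : coeff m (p - e) ≠ 0 := mem_support_iff.mp hm
  -- every j ∈ S appears in m
  have hmj : ∀ j ∈ S, 1 ≤ m j := by
    intro j hj
    have hcoeff : coeff (Finsupp.single j 3 + m) ((X j : MvPolynomial E ℤ) ^ 3 * (p - e))
        = coeff m (p - e) := by
      rw [X_pow_eq_monomial, coeff_monomial_mul, one_mul]
    have hsupp : Finsupp.single j 3 + m ∈
        ((X j : MvPolynomial E ℤ) ^ 3 * (p - e)).support :=
      mem_support_iff.mpr (hcoeff ▸ hm')
    have := (mem_span_X_pow_four_iff _).mp (hI ▸ hXq j hj) _ hsupp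
    obtain ⟨x, hx⟩ := this
    rcases eq_or_ne x j with rfl | hne
    · simp only [Finsupp.add_apply, Finsupp.single_eq_same] at hx
      omega
    · simp only [Finsupp.add_apply, Finsupp.single_eq_of_ne' (Ne.symm hne), zero_add] at hx
      exact absurd hx (not_le.mpr (hc x))
  -- degree contradiction
  have hSsub : S ⊆ m.support := fun j hj =>
    Finsupp.mem_support_iff.mpr (by have := hmj j hj; omega)
  have hdeg : ∑ i ∈ m.support, m i = k - 1 := by
    have := hq hm'
    simpa [Finsupp.weight, Finsupp.linearCombination, Finsupp.sum] using this
  have h1 : k ≤ ∑ j ∈ S, m j := by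
    calc k = ∑ _j ∈ S, 1 := by rw [Finset.sum_const, smul_eq_mul, mul_one, hk]
    _ ≤ ∑ j ∈ S, m j := Finset.sum_le_sum hmj
  have h2 : ∑ j ∈ S, m j ≤ ∑ i ∈ m.support, m i :=
    Finset.sum_le_sum_of_subset hSsub
  omega
end

section
/- Let a₁, a₂, a₃ ∈ ℂ∖{0,1} and suppose the discriminant condition (a₁a₂a₃ − a₁ − a₂ + a₃)² ≠ 4·a₁·a₂·(1 − a₃)² holds. Then there are exactly two pairs (p₅, p₆) ∈ ℂ² such that the five complex numbers 0, 1, a₁, p₅, p₆ are pairwise distinct, p₆ = a₂·p₅, and (p₅ − 1)(p₆ − a₁) = a₃·(p₆ − 1)(p₅ − a₁). Moreover, each such pair has the form (b, a₂·b) where b is a root of the nondegenerate quadratic a₂(1 − a₃)·b² + (a₁a₂a₃ − a₁ − a₂ + a₃)·b + a₁(1 − a₃) = 0. -/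
/-- Let `a₁, a₂, a₃ ∈ ℂ ∖ {0,1}` with
`(a₁a₂a₃ − a₁ − a₂ + a₃)² ≠ 4·a₁·a₂·(1 − a₃)²`.  Then there are exactly two pairs
`(p₅, p₆) ∈ ℂ²` such that `0, 1, a₁, p₅, p₆` are pairwise distinct, `p₆ = a₂·p₅`, and
`(p₅ − 1)(p₆ − a₁) = a₃·(p₆ − 1)(p₅ − a₁)`.  Moreover the quadratic
`a₂(1 − a₃)·b² + (a₁a₂a₃ − a₁ − a₂ + a₃)·b + a₁(1 − a₃)` is nondegenerate and each such
pair has the form `(b, a₂·b)` with `b` a root of this quadratic. -/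
theorem stmt_6 (a₁ a₂ a₃ : ℂ)
    (h₁0 : a₁ ≠ 0) (h₁1 : a₁ ≠ 1) (h₂0 : a₂ ≠ 0) (h₂1 : a₂ ≠ 1)
    (h₃0 : a₃ ≠ 0) (h₃1 : a₃ ≠ 1)
    (hdisc : (a₁ * a₂ * a₃ - a₁ - a₂ + a₃) ^ 2 ≠ 4 * a₁ * a₂ * (1 - a₃) ^ 2) :
    {p : ℂ × ℂ | ([0, 1, a₁, p.1, p.2] : List ℂ).Pairwise (· ≠ ·) ∧
        p.2 = a₂ * p.1 ∧
        (p.1 - 1) * (p.2 - a₁) = a₃ * ((p.2 - 1) * (p.1 - a₁))}.ncard = 2 ∧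
      a₂ * (1 - a₃) ≠ 0 ∧
      ∀ p : ℂ × ℂ,
        ([0, 1, a₁, p.1, p.2] : List ℂ).Pairwise (· ≠ ·) →
        p.2 = a₂ * p.1 →
        (p.1 - 1) * (p.2 - a₁) = a₃ * ((p.2 - 1) * (p.1 - a₁)) →
        ∃ b : ℂ, p = (b, a₂ * b) ∧
          a₂ * (1 - a₃) * b ^ 2 + (a₁ * a₂ * a₃ - a₁ - a₂ + a₃) * b + a₁ * (1 - a₃) = 0 := by
  have h31 : (1 : ℂ) - a₃ ≠ 0 := sub_ne_zero.mpr (Ne.symm h₃1)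
  have hA : a₂ * (1 - a₃) ≠ 0 := mul_ne_zero h₂0 h31
  set A : ℂ := a₂ * (1 - a₃) with hAdef
  set B : ℂ := a₁ * a₂ * a₃ - a₁ - a₂ + a₃ with hBdef
  set C : ℂ := a₁ * (1 - a₃) with hCdef
  -- every root of the quadratic gives a valid pair
  have key : ∀ b : ℂ, A * b ^ 2 + B * b + C = 0 →
      b ≠ 0 ∧ b ≠ 1 ∧ b ≠ a₁ ∧ a₂ * b ≠ 0 ∧ a₂ * b ≠ 1 ∧ a₂ * b ≠ a₁ ∧ a₂ * b ≠ b := by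
    intro b hq
    have hb0 : b ≠ 0 := by
      rintro rfl
      apply mul_ne_zero h₁0 h31
      linear_combination hq
    refine ⟨hb0, ?_, ?_, mul_ne_zero h₂0 hb0, ?_, ?_, ?_⟩
    · intro he
      have : a₃ * (1 - a₁) * (1 - a₂) = 0 := by
        linear_combination hq - (A * (b + 1) + B) * he
      rcases mul_eq_zero.mp this with h | h
      · rcases mul_eq_zero.mp h with h | h
        · exact h₃0 h
        · exact h₁1 (by linear_combination -h)
      · exact h₂1 (by linear_combination -h)
    · intro he
      have : a₁ * (1 - a₁) * (1 - a₂) = 0 := by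
        linear_combination hq - (A * (b + a₁) + B) * he
      rcases mul_eq_zero.mp this with h | h
      · rcases mul_eq_zero.mp h with h | h
        · exact h₁0 h
        · exact h₁1 (by linear_combination -h)
      · exact h₂1 (by linear_combination -h)
    · intro he
      have : a₂ * (1 - a₁) * (1 - a₂) = 0 := by
        linear_combination a₂ ^ 2 * hq - (A * (a₂ * b + 1) + B * a₂) * he
      rcases mul_eq_zero.mp this with h | h
      · rcases mul_eq_zero.mp h with h | h
        · exact h₂0 h
        · exact h₁1 (by linear_combination -h)
      · exact h₂1 (by linear_combination -h)
    · intro he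
      have : a₁ * a₂ * a₃ * (1 - a₁) * (1 - a₂) = 0 := by
        linear_combination a₂ ^ 2 * hq - (A * (a₂ * b + a₁) + B * a₂) * he
      rcases mul_eq_zero.mp this with h | h
      · rcases mul_eq_zero.mp h with h | h
        · rcases mul_eq_zero.mp h with h | h
          · rcases mul_eq_zero.mp h with h | h
            · exact h₁0 h
            · exact h₂0 h
          · exact h₃0 h
        · exact h₁1 (by linear_combination -h)
      · exact h₂1 (by linear_combination -h)
    · intro he
      have : (a₂ - 1) * b = 0 := by linear_combination he
      rcases mul_eq_zero.mp this with h | h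
      · exact h₂1 (by linear_combination h)
      · exact hb0 h
  -- membership characterization
  have hmem : ∀ p : ℂ × ℂ,
      (([0, 1, a₁, p.1, p.2] : List ℂ).Pairwise (· ≠ ·) ∧
        p.2 = a₂ * p.1 ∧
        (p.1 - 1) * (p.2 - a₁) = a₃ * ((p.2 - 1) * (p.1 - a₁))) ↔
      (p.2 = a₂ * p.1 ∧ A * p.1 ^ 2 + B * p.1 + C = 0) := by
    rintro ⟨x, y⟩
    simp only [List.pairwise_cons, List.mem_cons, List.not_mem_nil, or_false,
      List.mem_singleton]
    constructor
    · rintro ⟨_, ⟨hy, heq⟩⟩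
      --
      subst hy
      exact ⟨rfl, by linear_combination heq⟩
    · rintro ⟨hy, hq⟩
      --
      subst hy
      obtain ⟨hb0, hb1, hba, hc0, hc1, hca, hcb⟩ := key x hq
      refine ⟨?_, rfl, by linear_combination hq⟩
      constructor
      · simp only [forall_eq_or_imp, forall_eq]
        exact ⟨one_ne_zero.symm, h₁0.symm, fun h => hb0 h.symm, fun h => hc0 h.symm⟩
      constructor
      · simp only [forall_eq_or_imp, forall_eq]
        exact ⟨h₁1.symm, fun h => hb1 h.symm, fun h => hc1 h.symm⟩
      constructor
      · simp only [forall_eq_or_imp, forall_eq]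
        exact ⟨fun h => hba h.symm, fun h => hca h.symm⟩
      constructor
      · simp only [forall_eq]
        exact fun h => hcb h.symm
      simp
  -- discriminant
  obtain ⟨s, hs⟩ := IsAlgClosed.exists_pow_nat_eq (discrim A B C) (by norm_num : 0 < 2)
  have hdne : discrim A B C ≠ 0 := by
    rw [discrim]
    intro h
    apply hdisc
    linear_combination h
  have hs0 : s ≠ 0 := by
    intro h
    apply hdne
    rw [← hs, h]
    ring
  set r₁ : ℂ := (-B + s) / (2 * A) with hr₁
  set r₂ : ℂ := (-B - s) / (2 * A) with hr₂
  have hroot : ∀ x : ℂ, A * x ^ 2 + B * x + C = 0 ↔ x = r₁ ∨ x = r₂ := by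
    intro x
    rw [← quadratic_eq_zero_iff hA (by rw [← hs]; ring) x]
    constructor <;> intro h <;> linear_combination h
  have hrne : r₁ ≠ r₂ := by
    rw [hr₁, hr₂]
    intro h
    apply hs0
    field_simp at h
    linear_combination h / 2
  have hset : {p : ℂ × ℂ | ([0, 1, a₁, p.1, p.2] : List ℂ).Pairwise (· ≠ ·) ∧
        p.2 = a₂ * p.1 ∧
        (p.1 - 1) * (p.2 - a₁) = a₃ * ((p.2 - 1) * (p.1 - a₁))}
      = {(r₁, a₂ * r₁), (r₂, a₂ * r₂)} := by
    ext ⟨x, y⟩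
    simp only [Set.mem_setOf_eq, Set.mem_insert_iff, Set.mem_singleton_iff, hmem (x, y)]
    constructor
    · rintro ⟨hy, hq⟩
      --
      rcases (hroot x).mp hq with rfl | rfl
      · left; rw [Prod.mk.injEq]; exact ⟨rfl, hy⟩
      · right; rw [Prod.mk.injEq]; exact ⟨rfl, hy⟩
    · rintro (h | h) <;> rw [Prod.mk.injEq] at h <;> obtain ⟨rfl, rfl⟩ := h
      · exact ⟨rfl, (hroot _).mpr (Or.inl rfl)⟩
      · exact ⟨rfl, (hroot _).mpr (Or.inr rfl)⟩
  refine ⟨?_, hA, ?_⟩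
  · rw [hset]
    exact Set.ncard_pair (by simp [Prod.ext_iff]; intro h; exact absurd h hrne)
  · intro p hpw hp2 hcr
    exact ⟨p.1, by rw [Prod.ext_iff]; exact ⟨rfl, hp2⟩, by
      have := ((hmem p).mp ⟨hpw, hp2, hcr⟩).2
      linear_combination this⟩
end
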